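/- arXiv:2205.00199 — 3 statements merged into one kernel-verified Lean document; each statement's English description precedes it below -/
import Mathlib

section
/- (Proposition 3: SignFlip invariance for a batch-normalized block.) Let f : ℝ^{d} → ℝ^{k} be the network f(x) = W₂ · ReLU(g(x)) + b₂, where g is the batch-normalization block g(x)_i = γ_i · ((W₁ x + b₁)_i − μ_i)/s_i + β_i with W₁ ∈ ℝ^{n×d}, b₁, μ, β, γ ∈ ℝⁿ, s ∈ ℝⁿ with s_i > 0, and W₂ ∈ ℝ^{k×n}, b₂ ∈ ℝ^{k}. Let ε ∈ {−1, +1}ⁿ be an arbitrary sign vector, and define the sign-flipped network f' in which, for each neuron i, the i-th row of W₁ is replaced by ε_i times that row, b₁_i by ε_i b₁_i, μ_i by ε_i μ_i, and γ_i by ε_i γ_i, while β, s, W₂, b₂ are unchanged. Then f'(x) = f(x) for every input x ∈ ℝ^{d}. -/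
open Matrix

/-- Componentwise ReLU on a vector. -/
def relu {n : ℕ} (v : Fin n → ℝ) : Fin n → ℝ := fun i => max (v i) 0

/-- Batch-normalization block: `bn W b μ β γ s x i = γ i * ((W x + b) i − μ i) / s i + β i`. -/
noncomputable def bn {d n : ℕ} (W : Matrix (Fin n) (Fin d) ℝ) (b μ β γ s : Fin n → ℝ)
    (x : Fin d → ℝ) : Fin n → ℝ :=
  fun i => γ i * ((W *ᵥ x + b) i - μ i) / s i + β i

/-- Proposition 3 (SignFlip invariance for a batch-normalized block): flipping the
signs of the `i`-th row of `W₁`, of `b₁ i`, `μ i` and `γ i` by an arbitrary sign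
`ε i ∈ {−1, +1}` leaves the network `W₂ · ReLU(g(x)) + b₂` unchanged on every input. -/
theorem signFlip_bn (d n k : ℕ)
    (W₁ : Matrix (Fin n) (Fin d) ℝ) (b₁ μ β γ s : Fin n → ℝ) (hs : ∀ i, 0 < s i)
    (W₂ : Matrix (Fin k) (Fin n) ℝ) (b₂ : Fin k → ℝ)
    (ε : Fin n → ℝ) (hε : ∀ i, ε i = 1 ∨ ε i = -1) (x : Fin d → ℝ) :
    W₂ *ᵥ relu (bn (fun i j => ε i * W₁ i j) (fun i => ε i * b₁ i)
        (fun i => ε i * μ i) β (fun i => ε i * γ i) s x) + b₂ =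
      W₂ *ᵥ relu (bn W₁ b₁ μ β γ s x) + b₂ := by
  have hbn : bn (fun i j => ε i * W₁ i j) (fun i => ε i * b₁ i)
      (fun i => ε i * μ i) β (fun i => ε i * γ i) s x = bn W₁ b₁ μ β γ s x := by
    funext i
    have hε2 : ε i * ε i = 1 := by rcases hε i with h | h <;> rw [h] <;> norm_num
    have hmv : ((fun i j => ε i * W₁ i j) : Matrix (Fin n) (Fin d) ℝ) *ᵥ x
        = fun i => ε i * (W₁ *ᵥ x) i := by
      funext j
      simp [mulVec, dotProduct, Finset.mul_sum, mul_assoc]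
    simp only [bn, Pi.add_apply, hmv]
    rcases hε i with h | h <;> rw [h] <;> ring
  rw [hbn]
end

section
/- (Unified attack: composed LayerShuffle, NeuronScale and SignFlip on a batch-normalized hidden layer.) Let f : ℝ^{d} → ℝ^{k} be the network f(x) = W₂ · ReLU(g(x)) + b₂, where g is the batch-normalization block g(x)_i = γ_i · ((W₁ x + b₁)_i − μ_i)/s_i + β_i with W₁ ∈ ℝ^{n×d}, b₁, μ, β, γ ∈ ℝⁿ, s ∈ ℝⁿ with s_i > 0, and W₂ ∈ ℝ^{k×n}, b₂ ∈ ℝ^{k}. Let p be a permutation of {1, …, n}, λ ∈ ℝⁿ with λ_i > 0, and ε ∈ {−1, +1}ⁿ. Define the transformed network f' with parameters: the i-th row of W₁' equals ε_i λ_i times the p(i)-th row of W₁; b₁'_i = ε_i λ_i b₁_{p(i)}; μ'_i = ε_i λ_i μ_{p(i)}; s'_i = λ_i s_{p(i)}; γ'_i = ε_i γ_{p(i)}; β'_i = β_{p(i)}; and the i-th column of W₂' equals the p(i)-th column of W₂, with b₂ unchanged. Then f'(x) = f(x) for every input x ∈ ℝ^{d}. -/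
open Matrix

/-- Unified attack (LayerShuffle + NeuronScale + SignFlip on a batch-normalized hidden
layer): with a permutation `p`, positive scales `λ` and signs `ε ∈ {−1,+1}ⁿ`, the
transformed network with `W₁' i j = ε i * λ i * W₁ (p i) j`, `b₁' i = ε i * λ i * b₁ (p i)`,
`μ' i = ε i * λ i * μ (p i)`, `s' i = λ i * s (p i)`, `γ' i = ε i * γ (p i)`,
`β' i = β (p i)` and `W₂' j i = W₂ j (p i)` computes the same function as the original. -/
theorem unified_attack_bn (d n k : ℕ)
    (W₁ : Matrix (Fin n) (Fin d) ℝ) (b₁ μ β γ s : Fin n → ℝ) (hs : ∀ i, 0 < s i)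
    (W₂ : Matrix (Fin k) (Fin n) ℝ) (b₂ : Fin k → ℝ)
    (p : Equiv.Perm (Fin n))
    (lam : Fin n → ℝ) (hlam : ∀ i, 0 < lam i)
    (ε : Fin n → ℝ) (hε : ∀ i, ε i = 1 ∨ ε i = -1) (x : Fin d → ℝ) :
    (fun j i => W₂ j (p i)) *ᵥ
        relu (bn (fun i j => ε i * lam i * W₁ (p i) j)
          (fun i => ε i * lam i * b₁ (p i)) (fun i => ε i * lam i * μ (p i))
          (fun i => β (p i)) (fun i => ε i * γ (p i)) (fun i => lam i * s (p i)) x) + b₂ =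
      W₂ *ᵥ relu (bn W₁ b₁ μ β γ s x) + b₂ := by
  have hbn : bn (fun i j => ε i * lam i * W₁ (p i) j)
      (fun i => ε i * lam i * b₁ (p i)) (fun i => ε i * lam i * μ (p i))
      (fun i => β (p i)) (fun i => ε i * γ (p i)) (fun i => lam i * s (p i)) x =
      fun i => bn W₁ b₁ μ β γ s x (p i) := by
    funext i
    have hε2 : ε i * ε i = 1 := by rcases hε i with h | h <;> simp [h]
    have hl : (lam i) ≠ 0 := (hlam i).ne'
    have hmv : ((fun i j => ε i * lam i * W₁ (p i) j) *ᵥ x) i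
        = ε i * lam i * ((W₁ *ᵥ x) (p i)) := by
      simp [mulVec, dotProduct, Finset.mul_sum, mul_assoc]
    simp only [bn, Pi.add_apply, hmv]
    congr 1
    have key : ε i * γ (p i) * (ε i * lam i * (W₁ *ᵥ x) (p i) + ε i * lam i * b₁ (p i)
        - ε i * lam i * μ (p i))
        = lam i * (γ (p i) * ((W₁ *ᵥ x) (p i) + b₁ (p i) - μ (p i))) := by
      linear_combination lam i * γ (p i) * ((W₁ *ᵥ x) (p i) + b₁ (p i) - μ (p i)) * hε2
    rw [key, mul_div_assoc, mul_comm (lam i) (s (p i)), ← div_div, mul_div_assoc,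
      ← mul_div_assoc, mul_div_cancel_left₀ _ hl]
  rw [hbn]
  funext j
  simp only [Pi.add_apply, mulVec, dotProduct, relu]
  congr 1
  exact (Equiv.sum_comp p fun i => W₂ j i * max (bn W₁ b₁ μ β γ s x i) 0).symm ▸ rfl
end

section
/- (Watermark overwriting via SignFlip: arbitrary prescribed signs of the BN scale parameters.) Let f : ℝ^{d} → ℝ^{k} be the network f(x) = W₂ · ReLU(g(x)) + b₂, where g is the batch-normalization block g(x)_i = γ_i · ((W₁ x + b₁)_i − μ_i)/s_i + β_i with W₁ ∈ ℝ^{n×d}, b₁, μ, β, γ ∈ ℝⁿ, s ∈ ℝⁿ with s_i > 0, W₂ ∈ ℝ^{k×n}, b₂ ∈ ℝ^{k}, and suppose γ_i ≠ 0 for all i. Then for every target sign vector t ∈ {−1, +1}ⁿ there exist parameters W₁' ∈ ℝ^{n×d}, b₁', μ', γ' ∈ ℝⁿ such that the network f'(x) = W₂ · ReLU(g'(x)) + b₂ built from (W₁', b₁', μ', γ', β, s) satisfies f'(x) = f(x) for every x ∈ ℝ^{d}, and the sign of γ'_i equals t_i (i.e., γ'_i > 0 if t_i = +1 and γ'_i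 < 0 if t_i = −1) for every i. -/
open Matrix

/-- Watermark overwriting via SignFlip: for any target sign vector `t ∈ {−1,+1}ⁿ`
there exist parameters `W₁', b₁', μ', γ'` such that the network built from
`(W₁', b₁', μ', γ', β, s)` computes the same function as the one built from
`(W₁, b₁, μ, γ, β, s)` while the sign of `γ' i` equals `t i` for every `i`. -/
theorem signFlip_overwrite (d n k : ℕ)
    (W₁ : Matrix (Fin n) (Fin d) ℝ) (b₁ μ β γ s : Fin n → ℝ)
    (hs : ∀ i, 0 < s i) (hγ : ∀ i, γ i ≠ 0)
    (W₂ : Matrix (Fin k) (Fin n) ℝ) (b₂ : Fin k → ℝ)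
    (t : Fin n → ℝ) (ht : ∀ i, t i = 1 ∨ t i = -1) :
    ∃ (W₁' : Matrix (Fin n) (Fin d) ℝ) (b₁' μ' γ' : Fin n → ℝ),
      (∀ x : Fin d → ℝ,
          W₂ *ᵥ relu (bn W₁' b₁' μ' β γ' s x) + b₂ =
            W₂ *ᵥ relu (bn W₁ b₁ μ β γ s x) + b₂) ∧
        ∀ i, (t i = 1 → 0 < γ' i) ∧ (t i = -1 → γ' i < 0) := by
  set ε : Fin n → ℝ := fun i => t i * (if 0 < γ i then 1 else -1) with hε
  have hε2 : ∀ i, ε i * ε i = 1 := by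
    intro i
    rcases ht i with h | h <;> simp [hε, h] <;> split <;> ring
  refine ⟨Matrix.of (fun i j => ε i * W₁ i j), fun i => ε i * b₁ i,
    fun i => ε i * μ i, fun i => ε i * γ i, ?_, ?_⟩
  · intro x
    have hbn : bn (Matrix.of fun i j => ε i * W₁ i j) (fun i => ε i * b₁ i)
        (fun i => ε i * μ i) β (fun i => ε i * γ i) s x = bn W₁ b₁ μ β γ s x := by
      funext i
      have hmv : (Matrix.of (fun i j => ε i * W₁ i j) *ᵥ x) i = ε i * (W₁ *ᵥ x) i := by
        simp [Matrix.mulVec, dotProduct, Finset.mul_sum, mul_assoc]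
      simp only [bn, Pi.add_apply, hmv]
      have : ε i * γ i * (ε i * (W₁ *ᵥ x) i + ε i * b₁ i - ε i * μ i)
          = (ε i * ε i) * (γ i * ((W₁ *ᵥ x) i + b₁ i - μ i)) := by ring
      rw [this, hε2 i, one_mul]
    rw [hbn]
  · intro i
    rcases ht i with h | h <;>
      constructor <;> intro h' <;> simp [hε, h] at h' ⊢ <;>
      rcases lt_or_gt_of_ne (hγ i) with hg | hg <;>
      simp [hg, hg.not_gt] <;> linarith
end
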